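/- arXiv:2603.16720 — 2 statements merged into one kernel-verified Lean document; each statement's English description precedes it below -/
import Mathlib

section
/- Let P be a probability measure and Q₁,...,Qₘ be probability measures all absolutely continuous with respect to P, with Radon-Nikodym derivatives f_i = dQ_i/dP. Let π₁,...,πₘ ∈ [0,1] with Σ π_i = 1, and suppose E_P[∏ f_i^{π_i}] ∈ (0, ∞). Define the probability measure Q^b by dQ^b/dP = ∏ f_i^{π_i} / E_P[∏ f_i^{π_i}]. Then for every probability measure Q ≪ P with finite KL divergences to each Q_i, the identity Σ π_i · D_KL(Q ‖ Q_i) = D_KL(Q ‖ Q^b) + c holds, where c = −log E_P[∏ f_i^{π_i}]. -/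
/-!
Taking logarithms of the densities, `log (∏ fᵢ ^ πᵢ / Z) = ∑ πᵢ log fᵢ - log Z`, so since the
weights sum to one, `∑ πᵢ g log (g / fᵢ)` and `g log (g / (∏ fᵢ ^ πᵢ / Z)) - g log Z` agree
pointwise wherever the `fᵢ` are positive. Integrating against `P` and using `∫ g dP = 1` gives
the identity.
-/

open MeasureTheory Real Finset

lemma Real.log_prod_rpow {ι : Type*} {s : Finset ι} {x : ι → ℝ} (hx : ∀ i ∈ s, 0 < x i)
    (w : ι → ℝ) : log (∏ i ∈ s, x i ^ w i) = ∑ i ∈ s, w i * log (x i) := by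
  rw [log_prod fun i hi => (rpow_pos_of_pos (hx i hi) _).ne']
  exact sum_congr rfl fun i hi => log_rpow (hx i hi) _

lemma Real.sum_mul_mul_log_div_eq {ι : Type*} [Fintype ι] {w : ι → ℝ} (hw : ∑ i, w i = 1)
    {x : ι → ℝ} (hx : ∀ i, 0 < x i) {Z : ℝ} (hZ : Z ≠ 0) (y : ℝ) :
    ∑ i, w i * (y * log (y / x i)) = y * log (y / ((∏ i, x i ^ w i) / Z)) - y * log Z := by
  rcases eq_or_ne y 0 with rfl | hy
  · simp
  have hprod : 0 < ∏ i, x i ^ w i := prod_pos fun i _ => rpow_pos_of_pos (hx i) _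
  rw [log_div hy (div_ne_zero hprod.ne' hZ), log_div hprod.ne' hZ,
    log_prod_rpow (fun i _ => hx i)]
  calc ∑ i, w i * (y * log (y / x i))
      = (∑ i, w i) * (y * log y) - y * ∑ i, w i * log (x i) := by
        simp only [log_div hy (hx _).ne', sum_mul, mul_sum, ← sum_sub_distrib]
        exact sum_congr rfl fun i _ => by ring
    _ = _ := by rw [hw]; ring

theorem kl_barycentre_decomposition_general
    {Ω : Type*} [MeasurableSpace Ω] (P : Measure Ω)
    (m : ℕ) (f : Fin m → Ω → ℝ) (w : Fin m → ℝ)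
    (hws : ∑ i, w i = 1)
    (hfpos : ∀ i, ∀ᵐ ω ∂P, 0 < f i ω)
    (Z : ℝ) (hZpos : 0 < Z)
    (g : Ω → ℝ) (hgone : ∫ ω, g ω ∂P = 1)
    -- Q ≪ Q_i automatically since the Q_i are equivalent to P; finite KL divergences:
    (hKLi : ∀ i, Integrable (fun ω => g ω * Real.log (g ω / f i ω)) P)
    (hKLb : Integrable (fun ω => g ω * Real.log (g ω / ((∏ i, f i ω ^ w i) / Z))) P) :
    ∑ i, w i * ∫ ω, g ω * Real.log (g ω / f i ω) ∂P
      = (∫ ω, g ω * Real.log (g ω / ((∏ i, f i ω ^ w i) / Z)) ∂P) + (- Real.log Z) := by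
  have hpointwise : ∀ᵐ ω ∂P, ∑ i, w i * (g ω * log (g ω / f i ω))
      = g ω * log (g ω / ((∏ i, f i ω ^ w i) / Z)) - g ω * log Z := by
    filter_upwards [ae_all_iff.2 hfpos] with ω hf
    exact sum_mul_mul_log_div_eq hws hf hZpos.ne' (g ω)
  calc ∑ i, w i * ∫ ω, g ω * log (g ω / f i ω) ∂P
      = ∫ ω, ∑ i, w i * (g ω * log (g ω / f i ω)) ∂P := by
        rw [integral_finsetSum _ fun i _ => (hKLi i).const_mul _]
        simp only [integral_const_mul]
    _ = ∫ ω, (g ω * log (g ω / ((∏ i, f i ω ^ w i) / Z)) - g ω * log Z) ∂P :=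
        integral_congr_ae hpointwise
    _ = _ := by
        rw [integral_sub hKLb ((integrable_of_integral_eq_one hgone).mul_const _),
          integral_mul_const, hgone, one_mul, sub_eq_add_neg]

/-- KL decomposition identity for the weighted barycentre: if `Q_i` have `P`-densities `f i`,
`Q` has `P`-density `g` (with `Q ≪ Q_i`), and `Q^b` has density `(∏ f i ^ w i) / Z` with
`Z = E_P[∏ f i ^ w i] ∈ (0,∞)`, then
`Σ π i · D_KL(Q‖Q_i) = D_KL(Q‖Q^b) + c` with `c = −log Z`.
Here `D_KL(Q‖Q_i) = ∫ g log (g / f i) dP` and `D_KL(Q‖Q^b) = ∫ g log (g / ((∏ f i ^ w i)/Z)) dP`. -/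
theorem kl_barycentre_decomposition
    {Ω : Type*} [MeasurableSpace Ω] (P : Measure Ω) [IsProbabilityMeasure P]
    (m : ℕ) (f : Fin m → Ω → ℝ) (w : Fin m → ℝ)
    (hw : ∀ i, w i ∈ Set.Icc (0:ℝ) 1) (hws : ∑ i, w i = 1)
    (hfmeas : ∀ i, Measurable (f i))
    (hfpos : ∀ i, ∀ᵐ ω ∂P, 0 < f i ω)
    (hfint : ∀ i, Integrable (f i) P) (hfone : ∀ i, ∫ ω, f i ω ∂P = 1)
    (hprodint : Integrable (fun ω => ∏ i, f i ω ^ w i) P)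
    (Z : ℝ) (hZ : Z = ∫ ω, ∏ i, f i ω ^ w i ∂P) (hZpos : 0 < Z)
    (g : Ω → ℝ) (hgmeas : Measurable g)
    (hgpos : ∀ᵐ ω ∂P, 0 ≤ g ω) (hgone : ∫ ω, g ω ∂P = 1)
    -- Q ≪ Q_i automatically since the Q_i are equivalent to P; finite KL divergences:
    (hKLi : ∀ i, Integrable (fun ω => g ω * Real.log (g ω / f i ω)) P)
    (hKLb : Integrable (fun ω => g ω * Real.log (g ω / ((∏ i, f i ω ^ w i) / Z))) P) :
    ∑ i, w i * ∫ ω, g ω * Real.log (g ω / f i ω) ∂P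
      = (∫ ω, g ω * Real.log (g ω / ((∏ i, f i ω ^ w i) / Z)) ∂P) + (- Real.log Z) :=
  kl_barycentre_decomposition_general P m f w hws hfpos Z hZpos g hgone hKLi hKLb
end

section
/- (Constrained barycentre) Let Q^b be a probability measure equivalent to P, Y a random variable, and λ ∈ ℝ such that E^{Q^b}[exp(−λY)] < ∞ and E^{Q^b}[Y·exp(−λY)]/E^{Q^b}[exp(−λY)] = E_P[Y]. Define Q† by dQ†/dQ^b = exp(−λY)/E^{Q^b}[exp(−λY)]. Then for every probability measure Q̃ ≪ Q^b with E^{Q̃}[Y] = E_P[Y] and finite D_KL(Q̃ ‖ Q^b), the Pythagorean identity D_KL(Q̃ ‖ Q^b) = D_KL(Q̃ ‖ Q†) + D_KL(Q† ‖ Q^b) holds. Consequently Q† uniquely minimizes D_KL(Q ‖ Q^b) over probability measures Q ≪ Q^b with E^Q[Y] = E_P[Y]. -/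
open MeasureTheory Real InformationTheory

/-!
The log-density `log q† = -λ Y - log Z` of the tilted measure is affine in `Y`, and `Q̃` and `Q†`
have the same mass and the same mean of `Y`; hence `∫ g log q† = ∫ q† log q†`. Splitting
`g log g = g log (g / q†) + g log q†` then gives the Pythagorean identity. Minimality and
uniqueness follow from Gibbs' inequality in the form `g log (g / q) - g + q = q klFun (g / q) ≥ 0`,
with equality only where `g = q`.
-/

lemma mul_log_eq_mul_log_div_add {a b : ℝ} (hb : b ≠ 0) :
    a * log a = a * log (a / b) + a * log b := by
  rcases eq_or_ne a 0 with rfl | ha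
  · simp
  · rw [log_div ha hb]; ring

lemma mul_klFun_div_eq {a b : ℝ} (hb : b ≠ 0) :
    b * klFun (a / b) = a * log (a / b) - a + b := by
  rw [klFun_apply]; field_simp; ring

section Densities

variable {Ω : Type*} [MeasurableSpace Ω] {μ : Measure Ω}

lemma integral_mul_affine {g Y : Ω → ℝ} {c d : ℝ} (hg : Integrable g μ)
    (hgY : Integrable (fun ω => g ω * (c * Y ω + d)) μ) :
    ∫ ω, g ω * (c * Y ω + d) ∂μ = c * ∫ ω, g ω * Y ω ∂μ + d * ∫ ω, g ω ∂μ := by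
  have hcY : Integrable (fun ω => c * (g ω * Y ω)) μ :=
    (hgY.sub (hg.const_mul d)).congr (ae_of_all _ fun ω => by simp only [Pi.sub_apply]; ring)
  calc ∫ ω, g ω * (c * Y ω + d) ∂μ = ∫ ω, c * (g ω * Y ω) + d * g ω ∂μ := by
        congr 1; ext ω; ring
    _ = c * ∫ ω, g ω * Y ω ∂μ + d * ∫ ω, g ω ∂μ := by
        rw [integral_add hcY (hg.const_mul d), integral_const_mul, integral_const_mul]

theorem integral_mul_log_eq_of_log_affine {g h q Y : Ω → ℝ} {c d : ℝ}
    (hlog : ∀ ω, log (q ω) = c * Y ω + d) (hg : Integrable g μ) (hh : Integrable h μ)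
    (hgq : Integrable (fun ω => g ω * log (q ω)) μ) (hhq : Integrable (fun ω => h ω * log (q ω)) μ)
    (hmass : ∫ ω, g ω ∂μ = ∫ ω, h ω ∂μ) (hmean : ∫ ω, g ω * Y ω ∂μ = ∫ ω, h ω * Y ω ∂μ) :
    ∫ ω, g ω * log (q ω) ∂μ = ∫ ω, h ω * log (q ω) ∂μ := by
  simp_rw [hlog] at hgq hhq ⊢
  rw [integral_mul_affine hg hgq, integral_mul_affine hh hhq, hmass, hmean]

variable {g q : Ω → ℝ}

lemma integral_mul_klFun_div (hq : ∀ ω, 0 < q ω) (hg : Integrable g μ) (hqi : Integrable q μ)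
    (hgq : Integrable (fun ω => g ω * log (g ω / q ω)) μ) :
    ∫ ω, q ω * klFun (g ω / q ω) ∂μ
      = ∫ ω, g ω * log (g ω / q ω) ∂μ - ∫ ω, g ω ∂μ + ∫ ω, q ω ∂μ := by
  simp_rw [mul_klFun_div_eq (hq _).ne']
  rw [integral_add (f := fun ω => g ω * log (g ω / q ω) - g ω) (hgq.sub hg) hqi,
    integral_sub hgq hg]

lemma mul_klFun_div_nonneg_ae (hg0 : ∀ᵐ ω ∂μ, 0 ≤ g ω) (hq : ∀ ω, 0 < q ω) :
    ∀ᵐ ω ∂μ, 0 ≤ q ω * klFun (g ω / q ω) :=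
  hg0.mono fun ω h => mul_nonneg (hq ω).le (klFun_nonneg (div_nonneg h (hq ω).le))

theorem integral_sub_le_integral_mul_log_div (hg0 : ∀ᵐ ω ∂μ, 0 ≤ g ω) (hq : ∀ ω, 0 < q ω)
    (hg : Integrable g μ) (hqi : Integrable q μ)
    (hgq : Integrable (fun ω => g ω * log (g ω / q ω)) μ) :
    ∫ ω, g ω ∂μ - ∫ ω, q ω ∂μ ≤ ∫ ω, g ω * log (g ω / q ω) ∂μ := by
  have := integral_nonneg_of_ae (mul_klFun_div_nonneg_ae hg0 hq)
  rw [integral_mul_klFun_div hq hg hqi hgq] at this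
  linarith

theorem ae_eq_of_integral_mul_log_div_eq (hg0 : ∀ᵐ ω ∂μ, 0 ≤ g ω) (hq : ∀ ω, 0 < q ω)
    (hg : Integrable g μ) (hqi : Integrable q μ)
    (hgq : Integrable (fun ω => g ω * log (g ω / q ω)) μ)
    (heq : ∫ ω, g ω * log (g ω / q ω) ∂μ = ∫ ω, g ω ∂μ - ∫ ω, q ω ∂μ) :
    g =ᵐ[μ] q := by
  have hint : Integrable (fun ω => q ω * klFun (g ω / q ω)) μ :=
    ((hgq.sub hg).add hqi).congr (ae_of_all _ fun ω => (mul_klFun_div_eq (hq ω).ne').symm)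
  have hzero : (fun ω => q ω * klFun (g ω / q ω)) =ᵐ[μ] 0 := by
    rw [← integral_eq_zero_iff_of_nonneg_ae (mul_klFun_div_nonneg_ae hg0 hq) hint,
      integral_mul_klFun_div hq hg hqi hgq, heq]
    ring
  filter_upwards [hzero, hg0] with ω hω hgω
  have hkl : klFun (g ω / q ω) = 0 := (mul_eq_zero.mp hω).resolve_left (hq ω).ne'
  rwa [klFun_eq_zero_iff (div_nonneg hgω (hq ω).le), div_eq_one_iff_eq (hq ω).ne'] at hkl

end Densities

theorem constrained_barycentre_pythagoras_general
    {Ω : Type*} [MeasurableSpace Ω]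
    (R : Measure Ω)
    (Y : Ω → ℝ)
    (mu : ℝ)
    (lam : ℝ)
    (hexp : Integrable (fun ω => Real.exp (-lam * Y ω)) R)
    (hlam : (∫ ω, Y ω * Real.exp (-lam * Y ω) ∂ R)
        / (∫ ω, Real.exp (-lam * Y ω) ∂ R) = mu)
    (qd : Ω → ℝ)
    (hqd : qd = fun ω => Real.exp (-lam * Y ω) / ∫ ω', Real.exp (-lam * Y ω') ∂ R)
    (hqdKL : Integrable (fun ω => qd ω * Real.log (qd ω)) R) :
    ∀ g : Ω → ℝ, Measurable g → (∀ᵐ ω ∂ R, 0 ≤ g ω) → (∫ ω, g ω ∂ R = 1) →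
      (∫ ω, g ω * Y ω ∂ R = mu) →
      Integrable (fun ω => g ω * Real.log (g ω)) R →
      Integrable (fun ω => g ω * Real.log (g ω / qd ω)) R →
      ((∫ ω, g ω * Real.log (g ω) ∂ R)
          = (∫ ω, g ω * Real.log (g ω / qd ω) ∂ R)
            + ∫ ω, qd ω * Real.log (qd ω) ∂ R) ∧
      (∫ ω, qd ω * Real.log (qd ω) ∂ R) ≤ (∫ ω, g ω * Real.log (g ω) ∂ R) ∧
      ((∫ ω, g ω * Real.log (g ω) ∂ R) = (∫ ω, qd ω * Real.log (qd ω) ∂ R)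
        → g =ᵐ[R] qd) := by
  intro g _ hg0 hg_mass hg_mean hg_log hg_kl
  have : NeZero R := ⟨by rintro rfl; simp at hg_mass⟩
  set Z := ∫ ω, Real.exp (-lam * Y ω) ∂ R
  have hZ : 0 < Z := integral_exp_pos hexp
  have hq_pos : ∀ ω, 0 < qd ω := fun ω => hqd ▸ div_pos (exp_pos _) hZ
  have hq_log : ∀ ω, log (qd ω) = -lam * Y ω + -log Z := fun ω => by
    rw [hqd, log_div (exp_ne_zero _) hZ.ne', log_exp, sub_eq_add_neg]
  have hq_int : Integrable qd R := hqd ▸ hexp.div_const Z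
  have hq_mass : ∫ ω, qd ω ∂ R = 1 := by rw [hqd, integral_div, div_self hZ.ne']
  have hq_mean : ∫ ω, qd ω * Y ω ∂ R = mu := by
    simp_rw [hqd, div_mul_eq_mul_div, mul_comm (Real.exp _)]; rw [integral_div, hlam]
  have hg_int : Integrable g R := Integrable.of_integral_ne_zero (by simp [hg_mass])
  have hsplit := fun ω => mul_log_eq_mul_log_div_add (a := g ω) (hq_pos ω).ne'
  have hg_kl_int_TMP : Integrable (fun ω => g ω * log (qd ω)) R :=
    (hg_log.sub hg_kl).congr
      (ae_of_all _ fun ω => by simp only [Pi.sub_apply, hsplit ω]; ring)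
  have hcross : ∫ ω, g ω * log (qd ω) ∂ R = ∫ ω, qd ω * log (qd ω) ∂ R :=
    integral_mul_log_eq_of_log_affine hq_log hg_int hq_int hg_kl_int_TMP hqdKL
      (by rw [hg_mass, hq_mass]) (by rw [hg_mean, hq_mean])
  have hpyth : ∫ ω, g ω * log (g ω) ∂ R = ∫ ω, g ω * log (g ω / qd ω) ∂ R
      + ∫ ω, qd ω * log (qd ω) ∂ R := by
    simp_rw [hsplit]; rw [integral_add hg_kl hg_kl_int_TMP, hcross]
  have hgibbs := integral_sub_le_integral_mul_log_div hg0 hq_pos hg_int hq_int hg_kl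
  rw [hg_mass, hq_mass, sub_self] at hgibbs
  refine ⟨hpyth, by linarith, fun heq => ?_⟩
  exact ae_eq_of_integral_mul_log_div_eq hg0 hq_pos hg_int hq_int hg_kl
    (by rw [hg_mass, hq_mass]; linarith)

/-- Constrained barycentre: Pythagorean identity and unique minimization. With base measure
`R = Q^b`, tilting parameter `lam` matching the `P`-mean `mu = E_P[Y]`, and
`q† = exp(−lam·Y)/E^R[exp(−lam·Y)]` the `R`-density of `Q†`, every `Q̃ ≪ R` (with `R`-density
`g`) satisfying the mean constraint and with finite KL divergence satisfies
`D_KL(Q̃‖R) = D_KL(Q̃‖Q†) + D_KL(Q†‖R)`; consequently `Q†` is the unique KL-minimizer on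
the constraint set. -/
theorem constrained_barycentre_pythagoras
    {Ω : Type*} [MeasurableSpace Ω]
    (P R : Measure Ω) [IsProbabilityMeasure P] [IsProbabilityMeasure R]
    (Y : Ω → ℝ) (hYmeas : Measurable Y) (hYintP : Integrable Y P)
    (mu : ℝ) (hmu : mu = ∫ ω, Y ω ∂P)
    (lam : ℝ)
    (hexp : Integrable (fun ω => Real.exp (-lam * Y ω)) R)
    (hexpY : Integrable (fun ω => Y ω * Real.exp (-lam * Y ω)) R)
    (hlam : (∫ ω, Y ω * Real.exp (-lam * Y ω) ∂ R)
        / (∫ ω, Real.exp (-lam * Y ω) ∂ R) = mu)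
    (qd : Ω → ℝ)
    (hqd : qd = fun ω => Real.exp (-lam * Y ω) / ∫ ω', Real.exp (-lam * Y ω') ∂ R)
    (hqdKL : Integrable (fun ω => qd ω * Real.log (qd ω)) R) :
    ∀ g : Ω → ℝ, Measurable g → (∀ᵐ ω ∂ R, 0 ≤ g ω) → (∫ ω, g ω ∂ R = 1) →
      (∫ ω, g ω * Y ω ∂ R = mu) →
      Integrable (fun ω => g ω * Real.log (g ω)) R →
      Integrable (fun ω => g ω * Real.log (g ω / qd ω)) R →
      ((∫ ω, g ω * Real.log (g ω) ∂ R)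
          = (∫ ω, g ω * Real.log (g ω / qd ω) ∂ R)
            + ∫ ω, qd ω * Real.log (qd ω) ∂ R) ∧
      (∫ ω, qd ω * Real.log (qd ω) ∂ R) ≤ (∫ ω, g ω * Real.log (g ω) ∂ R) ∧
      ((∫ ω, g ω * Real.log (g ω) ∂ R) = (∫ ω, qd ω * Real.log (qd ω) ∂ R)
        → g =ᵐ[R] qd) :=
  constrained_barycentre_pythagoras_general R Y mu lam hexp hlam qd hqd hqdKL
end
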